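/- arXiv:1306.2628 — 5 statements merged into one kernel-verified Lean document; each statement's English description precedes it below -/
import Mathlib

section
/- (Percolative identity) Let Z ⊆ (−∞, 0] be a locally finite set, unbounded below, with 0 ∈ Z, and label its points in decreasing order 0 = z₀ > z₁ > z₂ > ⋯. Then sup{−z_j : −z_j > 2(−z_{j−1}), j ≥ 1} = −inf((−∞,0] \ ⋃_{x ∈ Z}[2x, x]), as an identity in [0, ∞]. -/
/-- **Percolative identity.**  Let `Z ⊆ (-∞, 0]` be locally finite, unbounded below, with
`0 ∈ Z`, and let `z₀ = 0 > z₁ > z₂ > ⋯` enumerate its points in decreasing order.  Then,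
as an identity in `[0, ∞]` (within `EReal`),
`sup {-z_j : -z_j > 2 (-z_{j-1}), j ≥ 1} = - inf ((-∞,0] \ ⋃_{x ∈ Z} [2x, x])`. -/
theorem percolative_identity (Z : Set ℝ) (z : ℕ → ℝ)
    (hZsub : Z ⊆ Set.Iic 0) (hlf : ∀ r : ℝ, (Z ∩ Set.Icc r 0).Finite)
    (hub : ¬BddBelow Z) (h0Z : (0 : ℝ) ∈ Z)
    (hz : StrictAnti z) (hz0 : z 0 = 0) (hrange : Set.range z = Z) :
    sSup {d : EReal | ∃ j : ℕ, 1 ≤ j ∧ d = ((-z j : ℝ) : EReal) ∧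
        -z j > 2 * (-z (j - 1))} =
      -sInf ((fun x : ℝ => (x : EReal)) ''
        (Set.Iic (0 : ℝ) \ ⋃ x ∈ Z, Set.Icc (2 * x) x)) := by
  set S : Set EReal := {d : EReal | ∃ j : ℕ, 1 ≤ j ∧ d = ((-z j : ℝ) : EReal) ∧
        -z j > 2 * (-z (j - 1))} with hS
  set A : Set ℝ := Set.Iic (0 : ℝ) \ ⋃ x ∈ Z, Set.Icc (2 * x) x with hA
  have hzle : ∀ n, z n ≤ 0 := by
    intro n
    have := hz.antitone (Nat.zero_le n)
    simpa [hz0] using this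
  -- gap inclusion
  have hgap : ∀ j : ℕ, 1 ≤ j → z j < 2 * z (j - 1) →
      Set.Ioo (z j) (2 * z (j - 1)) ⊆ A := by
    intro j hj hlt y hy
    constructor
    · have : 2 * z (j - 1) ≤ 0 := by nlinarith [hzle (j - 1)]
      exact le_of_lt (lt_of_lt_of_le hy.2 this)
    · intro hyU
      rw [Set.mem_iUnion₂] at hyU
      obtain ⟨x, hxZ, hmem⟩ := hyU
      rw [← hrange] at hxZ
      obtain ⟨k, rfl⟩ := hxZ
      rw [Set.mem_Icc] at hmem
      obtain ⟨h1, h2⟩ := hmem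
      rcases le_or_gt k (j - 1) with hk | hk
      · have : z (j - 1) ≤ z k := hz.antitone hk
        nlinarith [hy.2]
      · have hjk : j ≤ k := by omega
        have : z k ≤ z j := hz.antitone hjk
        linarith [hy.1]
  -- LHS ≤ RHS
  apply le_antisymm
  · apply sSup_le
    rintro d ⟨j, hj, rfl, hgt⟩
    have hlt : z j < 2 * z (j - 1) := by linarith
    apply EReal.le_neg_of_le_neg
    show sInf _ ≤ -((-z j : ℝ) : EReal)
    rw [← EReal.coe_neg, neg_neg]
    · apply le_of_forall_gt_imp_ge_of_dense
      intro c hc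
      have h2e : ((z j : ℝ) : EReal) < ((2 * z (j - 1) : ℝ) : EReal) := by
        exact_mod_cast hlt
      obtain ⟨r, hr1, hr2⟩ := EReal.exists_between_coe_real (lt_min hc h2e)
      have hr1' : z j < r := by exact_mod_cast hr1
      have hr2' : (r : EReal) < ((2 * z (j - 1) : ℝ) : EReal) :=
        lt_of_lt_of_le hr2 (min_le_right _ _)
      have hr2'' : r < 2 * z (j - 1) := by exact_mod_cast hr2'
      have hrA : r ∈ A := hgap j hj hlt ⟨hr1', hr2''⟩
      have hmemI : ((r : ℝ) : EReal) ∈ (fun x : ℝ => (x : EReal)) '' A :=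
        ⟨r, hrA, rfl⟩
      calc sInf _ ≤ ((r : ℝ) : EReal) := sInf_le hmemI
        _ ≤ c := le_of_lt (lt_of_lt_of_le hr2 (min_le_left _ _))
  · rw [EReal.neg_le]
    apply le_sInf
    rintro b ⟨y, hyA, rfl⟩
    rw [← EReal.neg_le]
    -- construct the gap index for y
    have hyU := hyA.2
    have hynZ : y ∉ Z := by
      intro hyZ
      refine hyU (Set.mem_biUnion hyZ ⟨?_, le_refl y⟩)
      have h0 := hZsub hyZ
      rw [Set.mem_Iic] at h0
      linarith
    have hyneg : y < 0 := lt_of_le_of_ne hyA.1 (fun h => hynZ (h ▸ h0Z))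
    have hex : ∃ n, z n < y := by
      rw [not_bddBelow_iff] at hub
      obtain ⟨x, hxZ, hxy⟩ := hub y
      rw [← hrange] at hxZ
      obtain ⟨n, rfl⟩ := hxZ
      exact ⟨n, hxy⟩
    classical
    set j := Nat.find hex with hjdef
    have hPj : z j < y := Nat.find_spec hex
    have hj1 : 1 ≤ j := by
      rcases Nat.eq_zero_or_pos j with h | h
      · exfalso; rw [h] at hPj; rw [hz0] at hPj; linarith
      · exact h
    have hPj1 : ¬ z (j - 1) < y := Nat.find_min hex (by omega)
    push_neg at hPj1
    have hylt : y < z (j - 1) := lt_of_le_of_ne hPj1 (by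
      intro h
      exact hynZ (hrange ▸ ⟨j - 1, h.symm⟩))
    have hy2 : y < 2 * z (j - 1) := by
      by_contra hc
      push_neg at hc
      exact hyU (Set.mem_biUnion (hrange ▸ ⟨j - 1, rfl⟩) ⟨hc, le_of_lt hylt⟩)
    have hmem : ((-z j : ℝ) : EReal) ∈ S :=
      ⟨j, hj1, rfl, by linarith⟩
    calc (-(y : EReal)) = ((-y : ℝ) : EReal) := (EReal.coe_neg y).symm
      _ ≤ ((-z j : ℝ) : EReal) := by
          exact_mod_cast le_of_lt (by linarith : -y < -z j)
      _ ≤ sSup S := le_sSup hmem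
end

section
/- (Monotonicity under adding points) Let Z ⊆ Z' be two locally finite subsets of (−∞, 0], both containing 0 and unbounded below. Then R₀(Z') ≤ R₀(Z), where for such a set W, labeled in decreasing order 0 = w₀ > w₁ > w₂ > ⋯, one defines R₀(W) = sup{−w_j : −w_j > 2(−w_{j−1}), j ≥ 1}. -/
/-! A gap `w' (i+1) < 2 * w' i` of the finer configuration is inherited by the coarser one:
let `w (k+1)` be the first point of `Z` at or below `w' (i+1)`. Its predecessor `w k` lies in
`Z' ⊇ Z` strictly above `w' (i+1)`, hence at or above `w' i`, so `w (k+1) < 2 * w k`, and the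
new gap is at least as far out as the old one. -/

open Set

theorem exists_apply_succ_le_lt_apply {α : Type*} [LinearOrder α] {w : ℕ → α} {x : α}
    (h0 : x < w 0) (hx : ∃ n, w n ≤ x) : ∃ k, w (k + 1) ≤ x ∧ x < w k := by
  classical
  obtain ⟨k, hk⟩ : ∃ k, Nat.find hx = k + 1 :=
    Nat.exists_eq_succ_of_ne_zero fun h => (Nat.find_spec hx).not_gt (h ▸ h0)
  exact ⟨k, hk ▸ Nat.find_spec hx, not_le.1 (Nat.find_min hx (by omega))⟩

theorem Antitone.apply_le_of_apply_succ_lt {α : Type*} [Preorder α] {w : ℕ → α}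
    (hw : Antitone w) {y : α} (hy : y ∈ range w) {i : ℕ} (h : w (i + 1) < y) : w i ≤ y := by
  obtain ⟨m, rfl⟩ := hy
  have hmi : m ≤ i := by
    by_contra! him
    exact (hw him).not_gt h
  exact hw hmi

theorem exists_gap_le_of_range_subset {w w' : ℕ → ℝ} (hw0 : w 0 = 0)
    (hunb : ∀ x, ∃ n, w n ≤ x) (hw' : Antitone w') (hw'0 : w' 0 = 0)
    (hsub : range w ⊆ range w') {i : ℕ} (hgap : w' (i + 1) < 2 * w' i) :
    ∃ k, w (k + 1) < 2 * w k ∧ w (k + 1) ≤ w' (i + 1) := by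
  have hneg : w' (i + 1) < w 0 := by linarith [hw' (Nat.zero_le i)]
  obtain ⟨k, hk_le, hk_lt⟩ := exists_apply_succ_le_lt_apply hneg (hunb _)
  have hk : w' i ≤ w k := hw'.apply_le_of_apply_succ_lt (hsub ⟨k, rfl⟩) hk_lt
  exact ⟨k, by linarith, hk_le⟩

theorem R_antitone_in_configuration_general (Z Z' : Set ℝ) (w w' : ℕ → ℝ)
    (hub : ¬BddBelow Z)
    (hw0 : w 0 = 0) (hwrange : Set.range w = Z)
    (hw' : StrictAnti w') (hw'0 : w' 0 = 0) (hw'range : Set.range w' = Z')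
    (hZZ' : Z ⊆ Z') :
    sSup {d : EReal | ∃ j : ℕ, 1 ≤ j ∧ d = ((-w' j : ℝ) : EReal) ∧
        -w' j > 2 * (-w' (j - 1))} ≤
      sSup {d : EReal | ∃ j : ℕ, 1 ≤ j ∧ d = ((-w j : ℝ) : EReal) ∧
        -w j > 2 * (-w (j - 1))} := by
  subst hwrange hw'range
  have hunb : ∀ x, ∃ n, w n ≤ x := fun x => by
    obtain ⟨_, ⟨n, rfl⟩, hn⟩ := not_bddBelow_iff.1 hub x
    exact ⟨n, hn.le⟩
  refine sSup_le ?_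
  rintro _ ⟨j, hj, rfl, hgap⟩
  obtain ⟨i, rfl⟩ := Nat.exists_eq_add_of_le' hj
  rw [Nat.add_sub_cancel] at hgap
  obtain ⟨k, hk_gap, hk_le⟩ :=
    exists_gap_le_of_range_subset hw0 hunb hw'.antitone hw'0 hZZ' (i := i) (by linarith)
  refine le_sSup_of_le ⟨k + 1, by omega, rfl, ?_⟩ (by exact_mod_cast neg_le_neg hk_le)
  rw [Nat.add_sub_cancel]
  linarith

/-- **Monotonicity under adding points.**  Let `Z ⊆ Z'` be locally finite subsets of
`(-∞, 0]`, both containing `0` and unbounded below, enumerated in decreasing order as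
`0 = w₀ > w₁ > ⋯` and `0 = w₀' > w₁' > ⋯` respectively.  Then `R₀(Z') ≤ R₀(Z)`, where
`R₀(W) = sup {-w_j : -w_j > 2 (-w_{j-1}), j ≥ 1}` (computed in `EReal`). -/
theorem R_antitone_in_configuration (Z Z' : Set ℝ) (w w' : ℕ → ℝ)
    (hZsub : Z ⊆ Set.Iic 0) (hZ'sub : Z' ⊆ Set.Iic 0)
    (hlf : ∀ r : ℝ, (Z ∩ Set.Icc r 0).Finite) (hlf' : ∀ r : ℝ, (Z' ∩ Set.Icc r 0).Finite)
    (hub : ¬BddBelow Z) (hub' : ¬BddBelow Z')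
    (h0Z : (0 : ℝ) ∈ Z) (h0Z' : (0 : ℝ) ∈ Z')
    (hw : StrictAnti w) (hw0 : w 0 = 0) (hwrange : Set.range w = Z)
    (hw' : StrictAnti w') (hw'0 : w' 0 = 0) (hw'range : Set.range w' = Z')
    (hZZ' : Z ⊆ Z') :
    sSup {d : EReal | ∃ j : ℕ, 1 ≤ j ∧ d = ((-w' j : ℝ) : EReal) ∧
        -w' j > 2 * (-w' (j - 1))} ≤
      sSup {d : EReal | ∃ j : ℕ, 1 ≤ j ∧ d = ((-w j : ℝ) : EReal) ∧
        -w j > 2 * (-w (j - 1))} :=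
  R_antitone_in_configuration_general Z Z' w w' hub hw0 hwrange hw' hw'0 hw'range hZZ'
end

section
/- ℙ²-almost surely, on the event [0 ∈ 𝒵], for every z ∈ 𝒵 ∩ (0,∞) the greedy walk started at 0 never removes all marks from z; that is, ω_n(z) ≥ 1 for all n ≥ 0. (On the first visit to such z, the gap on its left is at least its initial size and the configuration to its right is untouched, so by definition of 𝒵 the walk stays to the right of z thereafter, leaving the second mark at z intact.) -/
open scoped ENNReal

noncomputable section

/-- The number of points of a configuration `Xs ⊆ ℝ` lying in a window `A`. -/
def ptCount (Xs : Set ℝ) (A : Set ℝ) : ℕ := (Xs ∩ A).ncard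

/-- `N` is a Poisson point process of intensity `c` (with respect to Lebesgue measure)
under the probability measure `P`: configurations are a.s. locally finite, the number of
points in any finite-volume measurable window is Poisson distributed with mean
`c * volume A`, and the counts in pairwise disjoint windows are independent. -/
def IsPoissonPP {Ω : Type} [MeasurableSpace Ω] (P : MeasureTheory.Measure Ω)
    (N : Ω → Set ℝ) (c : ℝ) : Prop :=
  (∀ᵐ ωs ∂P, ∀ r : ℝ, (N ωs ∩ Set.Icc (-r) r).Finite) ∧
  (∀ A : Set ℝ, MeasurableSet A → Measurable fun ωs => ptCount (N ωs) A) ∧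
  (∀ A : Set ℝ, MeasurableSet A → MeasureTheory.volume A ≠ ⊤ → ∀ n : ℕ,
      P {ωs | ptCount (N ωs) A = n} =
        ENNReal.ofReal (Real.exp (-(c * (MeasureTheory.volume A).toReal)) *
          (c * (MeasureTheory.volume A).toReal) ^ n / n.factorial)) ∧
  (∀ (m : ℕ) (A : Fin m → Set ℝ), (∀ i, MeasurableSet (A i)) →
      Pairwise (Function.onFun Disjoint A) →
      ProbabilityTheory.iIndepFun
        (fun i ωs => ptCount (N ωs) (A i)) P)

/-- `(X, Y)` is a two-mark Poisson configuration of parameter `p` under `P`: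
`X` is a Poisson point process of intensity `1` and `Y` is an independent `p`-thinning
of `X`.  Equivalently, `Y` (the doubly-marked points) and `X \ Y` (the singly-marked
points) are independent Poisson point processes of respective intensities `p` and `1-p`. -/
def IsTwoMarkPoisson {Ω : Type} [MeasurableSpace Ω] (P : MeasureTheory.Measure Ω)
    (X Y : Ω → Set ℝ) (p : ℝ) : Prop :=
  (∀ ωs, Y ωs ⊆ X ωs) ∧
  IsPoissonPP P Y p ∧
  IsPoissonPP P (fun ωs => X ωs \ Y ωs) (1 - p) ∧
  (∀ (m : ℕ) (A : Fin m → Set ℝ), (∀ i, MeasurableSet (A i)) →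
      Pairwise (Function.onFun Disjoint A) →
      ProbabilityTheory.iIndepFun
        (fun (k : Fin m × Bool) ωs =>
          ptCount (if k.2 then Y ωs else X ωs \ Y ωs) (A k.1)) P)

/-- The model of the paper, under the Palm measure `ℙ¹`:
* `X` is a Poisson point process of intensity `1` on `ℝ`, conditioned (in the Palm sense)
  to have a point at the origin, and `Y ⊆ X` is an independent `p`-thinning of `X`;
  points of `Y` carry two marks and the remaining points of `X` carry one mark
  (field `marks x 0`).
* For every starting point `x ∈ X`, `S x` is the greedy walk started at `x`:
  `S x 0 = x`, the configuration evolves by `ω_{n+1} = ω_n - δ_{S_n}`, and `S x (n+1)`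
  is (a.s.) the unique point `y ≠ S x n` carrying a mark in `ω_n` that is nearest
  to `S x n`.
* `Sp`/`marksp` is the analogous greedy walk run on the configuration
  `ω⁺ = ω` restricted to `(0,∞)` plus a single mark `δ₀` at the origin. -/
structure GreedyModel where
  Ω : Type
  [mΩ : MeasurableSpace Ω]
  P : MeasureTheory.Measure Ω
  hprob : MeasureTheory.IsProbabilityMeasure P
  p : ℝ
  hp0 : 0 < p
  hp1 : p < 1
  X : Ω → Set ℝ
  Y : Ω → Set ℝ
  hYX : ∀ ωs, Y ωs ⊆ X ωs
  /-- Palm conditioning on `0 ∈ 𝒳`: there is a point at the origin. -/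
  h0X : ∀ ωs, (0 : ℝ) ∈ X ωs
  /-- The point at the origin carries two marks with probability `p`. -/
  h0Y : P {ωs | (0 : ℝ) ∈ Y ωs} = ENNReal.ofReal p
  /-- Away from the origin, the configuration is a two-mark Poisson process. -/
  hpoisson : IsTwoMarkPoisson P (fun ωs => X ωs \ {0}) (fun ωs => Y ωs \ {0}) p
  /-- The mark at the origin is independent of the rest of the configuration. -/
  hindep0 : ∀ (m : ℕ) (A : Fin m × Bool → Set ℝ), (∀ i, MeasurableSet (A i)) →
      ProbabilityTheory.IndepFun
        ({ωs | (0 : ℝ) ∈ Y ωs}.indicator fun _ => (1 : ℕ))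
        (fun ωs (k : Fin m × Bool) =>
          ptCount (if k.2 then Y ωs \ {0} else X ωs \ (Y ωs ∪ {0})) (A k)) P
  /-- The greedy walk started at `x` and the associated evolving mark configurations. -/
  S : ℝ → ℕ → Ω → ℝ
  marks : ℝ → ℕ → Ω → ℝ → ℕ
  /-- Initially, points of `Y` carry two marks, other points of `X` carry one. -/
  hmarks0 : ∀ x ωs z, marks x 0 ωs z = (X ωs).indicator 1 z + (Y ωs).indicator 1 z
  /-- `ω_{n+1} = ω_n - δ_{S_n}`. -/
  hmarksrec : ∀ x n ωs z,
      marks x (n + 1) ωs z = marks x n ωs z - ({S x n ωs} : Set ℝ).indicator 1 z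
  /-- The walk started at a point `x` of `X` starts at `x` itself. -/
  hS0 : ∀ ωs, ∀ x ∈ X ωs, S x 0 ωs = x
  hmeasS : ∀ x n, Measurable fun ωs => S x n ωs
  /-- Almost surely, for each starting point `x ∈ X`, the walk is well defined:
  `S x (n+1)` is a point distinct from `S x n`, still carrying a mark in `ω_n`, and
  strictly closer to `S x n` than any other such point. -/
  hwalk : ∀ᵐ ωs ∂P, ∀ x ∈ X ωs, ∀ n : ℕ,
      S x (n + 1) ωs ≠ S x n ωs ∧ 1 ≤ marks x n ωs (S x (n + 1) ωs) ∧
      ∀ z : ℝ, z ≠ S x n ωs → z ≠ S x (n + 1) ωs → 1 ≤ marks x n ωs z →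
        |S x (n + 1) ωs - S x n ωs| < |z - S x n ωs|
  /-- The greedy walk on `ω⁺`. -/
  Sp : ℕ → Ω → ℝ
  marksp : ℕ → Ω → ℝ → ℕ
  hmarksp0 : ∀ ωs z, marksp 0 ωs z =
      ({0} : Set ℝ).indicator 1 z +
        (Set.Ioi (0 : ℝ)).indicator
          (fun w => (X ωs).indicator 1 w + (Y ωs).indicator 1 w) z
  hmarksprec : ∀ n ωs z,
      marksp (n + 1) ωs z = marksp n ωs z - ({Sp n ωs} : Set ℝ).indicator 1 z
  hSp0 : ∀ ωs, Sp 0 ωs = 0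
  hmeasSp : ∀ n, Measurable fun ωs => Sp n ωs
  hwalkp : ∀ᵐ ωs ∂P, ∀ n : ℕ,
      Sp (n + 1) ωs ≠ Sp n ωs ∧ 1 ≤ marksp n ωs (Sp (n + 1) ωs) ∧
      ∀ z : ℝ, z ≠ Sp n ωs → z ≠ Sp (n + 1) ωs → 1 ≤ marksp n ωs z →
        |Sp (n + 1) ωs - Sp n ωs| < |z - Sp n ωs|

attribute [instance] GreedyModel.mΩ

/-- `T_A = inf {n ≥ 1 : S_n ∈ A}`, with value `∞` (in `ℕ∞`) if the walk never enters `A`. -/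
def hitTime (S : ℕ → ℝ) (A : Set ℝ) : ℕ∞ :=
  sInf ((fun n : ℕ => (n : ℕ∞)) '' {n : ℕ | 1 ≤ n ∧ S n ∈ A})

/-- The points `X₀ = 0 < X₁ < X₂ < ⋯` of the configuration `Xs` on `[0,∞)`:
`nthPoint Xs k` is `X_k`. -/
def nthPoint (Xs : Set ℝ) : ℕ → ℝ
  | 0 => 0
  | n + 1 => sInf (Xs ∩ Set.Ioi (nthPoint Xs n))

open Classical in
/-- The observable `𝓡_y` of the paper, for the walk `S` (with evolving marks `marks`)
and `y ∈ 𝒳 ∩ (0,∞)`.  It is `0` if `T_{ℝ₋} < T_y`; otherwise, labelling the set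
`𝒳_{T_y} ∩ [0,y]` of points still carrying a mark at time `T_y` as
`0 = z_n < ⋯ < z₁ < z₀ = y`, it is `max {y - z_j : y - z_j > 2 (y - z_{j-1})}`
(the predecessor `z_{j-1}` of a point `z_j` of the configuration being the `sInf` of the
part of the configuration strictly above `z_j`). -/
def RScript (marks : ℕ → ℝ → ℕ) (S : ℕ → ℝ) (y : ℝ) : ℝ :=
  if hitTime S (Set.Iio 0) < hitTime S {y} then 0
  else
    let Z : Set ℝ := {z : ℝ | 1 ≤ marks (hitTime S {y}).toNat z} ∩ Set.Icc 0 y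
    sSup {d : ℝ | ∃ z ∈ Z, d = y - z ∧ y - z > 2 * (y - sInf (Z ∩ Set.Ioi z))}

/-- The set `𝒵 ⊆ 𝒴` of doubly-marked points `x` such that the greedy walk started at `x`
stays strictly to the right of `x` forever: `Sₙˣ > x` for all `n ≥ 1`. -/
def ZSet (M : GreedyModel) (ωs : M.Ω) : Set ℝ :=
  {x : ℝ | x ∈ M.Y ωs ∧ ∀ n : ℕ, 1 ≤ n → x < M.S x n ωs}

/-- The stationary observable `R_y` associated with a configuration `Z ∋ y`: labelling the
points of `Z ∩ (-∞, y]` in decreasing order `⋯ < z₂ < z₁ < z₀ = y`, it is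
`sup {y - z_j : y - z_j > 2 (y - z_{j-1}), j ≥ 1}` (the predecessor `z_{j-1}` of a point
`z_j` being the `sInf` of the part of the configuration strictly above `z_j`). -/
def RBig (Z : Set ℝ) (y : ℝ) : ℝ :=
  sSup {d : ℝ | ∃ z ∈ Z ∩ Set.Iio y, d = y - z ∧ y - z > 2 * (y - sInf (Z ∩ Set.Ioi z))}

/-!
Before its first visit to `z` the walk from `0` stays to the left of `z`, since a greedy walk
cannot jump over a marked point. So at that visit the marks on `[z, ∞)` are the initial ones and
all other points have only lost marks; from then on the walk coincides with the walk started at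
`z`, which stays in `(z, ∞)` because `z ∈ 𝒵`. Hence `z` is visited at most once and keeps one of
its two marks.
-/

open Set

structure IsGreedyWalk (S : ℕ → ℝ) (m : ℕ → ℝ → ℕ) : Prop where
  marks_succ : ∀ n w, m (n + 1) w = m n w - ({S n} : Set ℝ).indicator 1 w
  succ_ne : ∀ n, S (n + 1) ≠ S n
  one_le_marks_succ : ∀ n, 1 ≤ m n (S (n + 1))
  nearest : ∀ n w, w ≠ S n → w ≠ S (n + 1) → 1 ≤ m n w →
    |S (n + 1) - S n| < |w - S n|

namespace IsGreedyWalk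

variable {S S' : ℕ → ℝ} {m m' : ℕ → ℝ → ℕ} {z : ℝ}

theorem marks_eq_sub_card_visits (h : IsGreedyWalk S m) (n : ℕ) (w : ℝ) :
    m n w = m 0 w - ((Finset.range n).filter (fun j => S j = w)).card := by
  induction n with
  | zero => simp
  | succ n ih =>
    rw [h.marks_succ, ih, Finset.range_add_one, Finset.filter_insert, Nat.sub_sub]
    by_cases hn : S n = w
    · have hnot : n ∉ (Finset.range n).filter (fun j => S j = w) := by simp
      simp [hn, Finset.card_insert_of_notMem hnot, add_comm]
    · simp [hn, Ne.symm hn]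

theorem marks_le_marks_zero (h : IsGreedyWalk S m) (n : ℕ) : m n ≤ m 0 := fun w => by
  rw [h.marks_eq_sub_card_visits]
  exact Nat.sub_le _ _

theorem shift (h : IsGreedyWalk S m) (T : ℕ) :
    IsGreedyWalk (fun k => S (T + k)) (fun k => m (T + k)) :=
  ⟨fun k => h.marks_succ (T + k), fun k => h.succ_ne (T + k),
    fun k => h.one_le_marks_succ (T + k), fun k => h.nearest (T + k)⟩

/-- A greedy walk cannot jump over a marked point. -/
theorem lt_of_forall_ne (h : IsGreedyWalk S m) (h0 : S 0 < z) (hz : 1 ≤ m 0 z) :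
    ∀ n, (∀ j ≤ n, S j ≠ z) → S n < z := by
  intro n
  induction n with
  | zero => exact fun _ => h0
  | succ n ih =>
    intro hne
    have hSn : S n < z := ih fun j hj => hne j (Nat.le_succ_of_le hj)
    have hmarked : 1 ≤ m n z := by
      rwa [h.marks_eq_sub_card_visits, Finset.card_eq_zero.mpr, Nat.sub_zero]
      exact Finset.filter_eq_empty_iff.mpr fun j hj => hne j (by simp at hj; omega)
    by_contra! hge
    have hgt : z < S (n + 1) := lt_of_le_of_ne hge (hne (n + 1) le_rfl).symm
    have hclose := h.nearest n z hSn.ne' (hne (n + 1) le_rfl).symm hmarked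
    rw [abs_of_pos (by linarith), abs_of_pos (by linarith)] at hclose
    linarith

/-- By induction the first walk has at most the marks of the second, and the same ones on
`[z, ∞)`; so each walk's next point is still marked for the other, and uniqueness of the nearest
marked point forces the same step. -/
theorem eq_of_marks_le_of_eqOn (h : IsGreedyWalk S m) (h' : IsGreedyWalk S' m')
    (hS0 : S 0 = S' 0) (hle : m 0 ≤ m' 0) (heq : EqOn (m 0) (m' 0) (Ici z))
    (hz : ∀ k, z ≤ S' k) (k : ℕ) : S k = S' k := by
  suffices ∀ k, S k = S' k ∧ m k ≤ m' k ∧ EqOn (m k) (m' k) (Ici z) from (this k).1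
  intro k
  induction k with
  | zero => exact ⟨hS0, hle, heq⟩
  | succ k ih =>
    obtain ⟨hSk, hlek, heqk⟩ := ih
    have hstep : S (k + 1) = S' (k + 1) := by
      by_contra hne
      have hmarked : 1 ≤ m k (S' (k + 1)) := by
        rw [heqk (hz (k + 1))]; exact h'.one_le_marks_succ k
      have hmarked' : 1 ≤ m' k (S (k + 1)) := (h.one_le_marks_succ k).trans (hlek _)
      have hcloser := h.nearest k (S' (k + 1)) (hSk ▸ h'.succ_ne k) (Ne.symm hne) hmarked
      have hcloser' := h'.nearest k (S (k + 1)) (hSk ▸ h.succ_ne k) hne hmarked'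
      rw [hSk] at hcloser
      exact lt_asymm hcloser hcloser'
    refine ⟨hstep, fun w => ?_, fun w hw => ?_⟩
    · rw [h.marks_succ, h'.marks_succ, hSk]
      exact Nat.sub_le_sub_right (hlek w) _
    · rw [h.marks_succ, h'.marks_succ, hSk, heqk hw]

theorem visits_subsingleton (h : IsGreedyWalk S m) (h' : IsGreedyWalk S' m') (h0 : S 0 < z)
    (hS'0 : S' 0 = z) (hm : m 0 = m' 0) (hright : ∀ k, 1 ≤ k → z < S' k) (hz : 1 ≤ m 0 z) :
    {j | S j = z}.Subsingleton := by
  intro j₀ hj₀ j₁ hj₁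
  have hex : ∃ j, S j = z := ⟨j₀, hj₀⟩
  classical
  set T := Nat.find hex
  have hleft : ∀ i < T, S i < z := fun i hi =>
    h.lt_of_forall_ne h0 hz i fun j hj => Nat.find_min hex (by omega)
  have hunvisited : EqOn (m T) (m 0) (Ici z) := fun w hw => by
    rw [h.marks_eq_sub_card_visits, Finset.card_eq_zero.mpr, Nat.sub_zero]
    refine Finset.filter_eq_empty_iff.mpr fun i hi => (hleft i ?_).trans_le hw |>.ne
    simpa using hi
  have hcoupled : ∀ k, S (T + k) = S' k :=
    (h.shift T).eq_of_marks_le_of_eqOn h' (by simp [T, Nat.find_spec hex, hS'0])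
      (hm ▸ h.marks_le_marks_zero T) (hm ▸ hunvisited)
      (fun k => k.eq_zero_or_pos.elim (fun hk => by simp [hk, hS'0])
        fun hk => (hright k hk).le)
  suffices ∀ i, S i = z → i = T from (this j₀ hj₀).trans (this j₁ hj₁).symm
  intro i hi
  obtain ⟨k, rfl⟩ := Nat.exists_eq_add_of_le (Nat.find_min' hex hi)
  rcases k.eq_zero_or_pos with hk | hk
  · subst hk; rfl
  · exact absurd (hcoupled k ▸ hi) (hright k hk).ne'

theorem one_le_marks_of_visits_subsingleton (h : IsGreedyWalk S m) (hz : 2 ≤ m 0 z)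
    (hvisits : {j | S j = z}.Subsingleton) (n : ℕ) : 1 ≤ m n z := by
  have hcard : ((Finset.range n).filter (fun j => S j = z)).card ≤ 1 :=
    Finset.card_le_one.mpr fun i hi j hj =>
      hvisits (Finset.mem_filter.mp hi).2 (Finset.mem_filter.mp hj).2
  rw [h.marks_eq_sub_card_visits]
  omega

end IsGreedyWalk

theorem GreedyModel.ae_isGreedyWalk (M : GreedyModel) :
    ∀ᵐ ωs ∂M.P, ∀ x ∈ M.X ωs, IsGreedyWalk (fun n => M.S x n ωs) (fun n => M.marks x n ωs) :=
  M.hwalk.mono fun ωs hwalk x hx =>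
    ⟨fun n => M.hmarksrec x n ωs, fun n => (hwalk x hx n).1, fun n => (hwalk x hx n).2.1,
      fun n => (hwalk x hx n).2.2⟩

open ProbabilityTheory in
/-- `ℙ²`-almost surely, on the event `[0 ∈ 𝒵]`, the greedy walk started at the origin
never removes all marks from a point `z ∈ 𝒵 ∩ (0,∞)`: `ωₙ(z) ≥ 1` for all `n ≥ 0`. -/
theorem Z_points_are_never_cleared (M : GreedyModel) :
    ∀ᵐ ωs ∂(M.P[|{ωs | (0 : ℝ) ∈ M.Y ωs}]), (0 : ℝ) ∈ ZSet M ωs →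
      ∀ z ∈ ZSet M ωs ∩ Set.Ioi (0 : ℝ), ∀ n : ℕ, 1 ≤ M.marks 0 n ωs z := by
  filter_upwards [M.ae_isGreedyWalk.filter_mono cond_absolutelyContinuous.ae_le]
    with ωs hwalk _ z ⟨⟨hzY, hright⟩, hz0⟩ n
  have h0X := M.h0X ωs
  have hzX := M.hYX ωs hzY
  have htwo : 2 ≤ M.marks 0 0 ωs z := by simp [M.hmarks0, hzX, hzY]
  have hsame_start : M.marks 0 0 ωs = M.marks z 0 ωs := funext fun w => by simp only [M.hmarks0]
  have hvisits := (hwalk 0 h0X).visits_subsingleton (hwalk z hzX)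
    (by simpa [M.hS0 ωs 0 h0X] using hz0) (M.hS0 ωs z hzX) hsame_start hright (by omega)
  exact (hwalk 0 h0X).one_le_marks_of_visits_subsingleton htwo hvisits n

end
end

section
/- ℙ¹-almost surely, for every x ∈ 𝒳 ∩ [0,∞) with 𝒯^R_x < ∞, at the first time the greedy walk on ω⁺ hits the point x + L(x), no marks remain in the interval [x, x + L(x)): the walk has cleared x, has crossed every part of [x, x + ℓ(x)) at least twice, and has removed any mark left at x + ℓ(x) before hitting x + L(x). -/
open scoped ENNReal

noncomputable section

/-- The removal time `𝒯ᴿ_x = min {n ≥ 0 : ω⁺_{n+1}(x) = 0}` of the point `x` for the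
greedy walk on `ω⁺` (with value `∞` if `x` is never cleared). -/
def TRtime (M : GreedyModel) (ωs : M.Ω) (x : ℝ) : ℕ∞ :=
  sInf ((fun n : ℕ => (n : ℕ∞)) '' {n : ℕ | M.marksp (n + 1) ωs x = 0})

/-- `ℓ(x) = max_{0 ≤ n ≤ 𝒯ᴿ_x} Sₙ - x`, the maximal displacement of the `ω⁺`-walk to the
right of `x` up to the removal time of `x` (a junk value if `𝒯ᴿ_x = ∞`). -/
def ellReal (M : GreedyModel) (ωs : M.Ω) (x : ℝ) : ℝ :=
  sSup {d : ℝ | ∃ n : ℕ, n ≤ (TRtime M ωs x).toNat ∧ d = M.Sp n ωs - x}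

/-- `ξ(x)`: the gap between `x + ℓ(x)` and the next point of `𝒳` strictly to its right. -/
def xiReal (M : GreedyModel) (ωs : M.Ω) (x : ℝ) : ℝ :=
  sInf (M.X ωs ∩ Set.Ioi (x + ellReal M ωs x)) - (x + ellReal M ωs x)

/-- `L(x) = ℓ(x) + ξ(x) ∈ [0,∞]`, with `L(x) = ∞` when `𝒯ᴿ_x = ∞`. -/
def LGap (M : GreedyModel) (ωs : M.Ω) (x : ℝ) : ℝ≥0∞ :=
  if TRtime M ωs x < ⊤ then ENNReal.ofReal (ellReal M ωs x + xiReal M ωs x) else ⊤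

/-- The renewal positions: `posSeq k = L₀ + L₁ + ⋯ + L_{k-1}` where `L₀ = L(0)` and
`L_{k+1} = L(L₀ + ⋯ + L_k)` (the recursion being stopped at the value `∞`). -/
def posSeq (M : GreedyModel) (ωs : M.Ω) : ℕ → ℝ≥0∞
  | 0 => 0
  | k + 1 =>
      if posSeq M ωs k < ⊤ then
        posSeq M ωs k + LGap M ωs (posSeq M ωs k).toReal
      else ⊤

/-- The renewal lengths: `LSeq k = L_k = L(L₀ + ⋯ + L_{k-1})`. -/
def LSeq (M : GreedyModel) (ωs : M.Ω) (k : ℕ) : ℝ≥0∞ :=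
  if posSeq M ωs k < ⊤ then LGap M ωs (posSeq M ωs k).toReal else ⊤

/-!
Every point of `ω⁺` carries at most two marks, each visit removes one, and the greedy walk
never jumps over a point that still carries a mark. Let `T = 𝒯ᴿ_x`, so that `S_T = x`, let
`S_{n₀} = x + ℓ(x)` be the rightmost position up to time `T`, and let `r = x + L(x)` be the
next point of `𝒳` after it. A point of `(x, x + ℓ(x))` is crossed on the way from `0` out
to `S_{n₀}` and again on the way back to `S_T = x`; the point `x + ℓ(x)` is visited at time
`n₀` and again on the way from `x` to `r`. Either way it is visited twice before `r` is hit,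
so it has lost all its marks. The walk does hit `r`: otherwise `r` would stay marked and
confine the walk to the finitely many points of `[0, r)`, one of which would then be visited
three times.
-/

open Set

structure IsGreedyWalk_s15 (S : ℕ → ℝ) (marks : ℕ → ℝ → ℕ) : Prop where
  marks_succ : ∀ n z, marks (n + 1) z = marks n z - ({S n} : Set ℝ).indicator 1 z
  succ_ne : ∀ n, S (n + 1) ≠ S n
  one_le_marks_succ : ∀ n, 1 ≤ marks n (S (n + 1))
  nearest : ∀ n z, z ≠ S n → z ≠ S (n + 1) → 1 ≤ marks n z →
    |S (n + 1) - S n| < |z - S n|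

namespace IsGreedyWalk_s15

variable {S : ℕ → ℝ} {marks : ℕ → ℝ → ℕ}

theorem neg (hw : IsGreedyWalk_s15 S marks) :
    IsGreedyWalk_s15 (fun n => -S n) (fun n z => marks n (-z)) where
  marks_succ n z := by
    simp only [hw.marks_succ n (-z), indicator_apply, mem_singleton_iff, neg_eq_iff_eq_neg,
      Pi.one_apply]
  succ_ne n := by simpa using hw.succ_ne n
  one_le_marks_succ n := by simpa using hw.one_le_marks_succ n
  nearest n z hz hz' hm := by
    have := hw.nearest n (-z) (by grind) (by grind) hm
    convert this using 1 <;> rw [← abs_neg] <;> congr 1 <;> ring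

theorem marks_succ_of_eq (hw : IsGreedyWalk_s15 S marks) {n : ℕ} {z : ℝ} (h : S n = z) :
    marks (n + 1) z = marks n z - 1 := by
  simp [hw.marks_succ, h]

theorem marks_succ_of_ne (hw : IsGreedyWalk_s15 S marks) {n : ℕ} {z : ℝ} (h : S n ≠ z) :
    marks (n + 1) z = marks n z := by
  simp [hw.marks_succ, Ne.symm h]

theorem marks_antitone (hw : IsGreedyWalk_s15 S marks) (z : ℝ) : Antitone (marks · z) :=
  antitone_nat_of_succ_le fun n => by rw [hw.marks_succ]; exact Nat.sub_le _ _

theorem marks_eq_marks_zero (hw : IsGreedyWalk_s15 S marks) {n : ℕ} {z : ℝ}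
    (h : ∀ j < n, S j ≠ z) : marks n z = marks 0 z := by
  induction n with
  | zero => rfl
  | succ n ih =>
    rw [hw.marks_succ_of_ne (h n n.lt_succ_self), ih fun j hj => h j (hj.trans n.lt_succ_self)]

theorem not_mem_Ioo (hw : IsGreedyWalk_s15 S marks) {n : ℕ} {z : ℝ} (hz : 1 ≤ marks n z) :
    z ∉ Ioo (S n) (S (n + 1)) := fun ⟨h₁, h₂⟩ => by
  have := hw.nearest n z h₁.ne' h₂.ne hz
  rw [abs_of_pos (by linarith), abs_of_pos (by linarith)] at this
  linarith

theorem exists_eq_of_lt_of_lt (hw : IsGreedyWalk_s15 S marks) {a b : ℕ} {z : ℝ} (hab : a ≤ b)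
    (hz : 1 ≤ marks b z) (ha : S a < z) (hb : z < S b) : ∃ c, a < c ∧ c < b ∧ S c = z := by
  induction b, hab using Nat.le_induction with
  | base => linarith
  | succ b hab ih =>
    have hzb : 1 ≤ marks b z := hz.trans (hw.marks_antitone z b.le_succ)
    rcases lt_trichotomy (S b) z with hlt | heq | hgt
    · exact absurd ⟨hlt, hb⟩ (hw.not_mem_Ioo hzb)
    · exact ⟨b, hab.lt_of_ne (by rintro rfl; linarith), b.lt_succ_self, heq⟩
    · obtain ⟨c, hac, hcb, hc⟩ := ih hzb hgt
      exact ⟨c, hac, hcb.trans b.lt_succ_self, hc⟩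

theorem exists_eq_of_gt_of_gt (hw : IsGreedyWalk_s15 S marks) {a b : ℕ} {z : ℝ} (hab : a ≤ b)
    (hz : 1 ≤ marks b z) (ha : z < S a) (hb : S b < z) : ∃ c, a < c ∧ c < b ∧ S c = z := by
  obtain ⟨c, hac, hcb, hc⟩ :=
    hw.neg.exists_eq_of_lt_of_lt (z := -z) hab (by simpa using hz) (by simpa using ha)
      (by simpa using hb)
  exact ⟨c, hac, hcb, neg_inj.mp hc⟩

theorem marks_eq_zero_of_visits (hw : IsGreedyWalk_s15 S marks) (h2 : ∀ z, marks 0 z ≤ 2)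
    {c₁ c₂ n : ℕ} {z : ℝ} (h₁₂ : c₁ < c₂) (h₂n : c₂ < n) (h₁ : S c₁ = z) (h₂ : S c₂ = z) :
    marks n z = 0 := by
  have e₁ := hw.marks_succ_of_eq h₁
  have e₂ := hw.marks_succ_of_eq h₂
  have a₁ : marks c₁ z ≤ marks 0 z := hw.marks_antitone z (Nat.zero_le c₁)
  have a₂ : marks c₂ z ≤ marks (c₁ + 1) z := hw.marks_antitone z h₁₂
  have a₃ : marks n z ≤ marks (c₂ + 1) z := hw.marks_antitone z h₂n
  have := h2 z
  omega

theorem not_forall_mem_of_finite (hw : IsGreedyWalk_s15 S marks) (h2 : ∀ z, marks 0 z ≤ 2)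
    {F : Set ℝ} (hF : F.Finite) : ¬ ∀ n, S n ∈ F := fun hSF => by
  have : Finite F := hF.to_subtype
  obtain ⟨y, hy⟩ := Finite.exists_infinite_fiber fun n => (⟨S n, hSF n⟩ : F)
  have hvisits : {n | S n = y}.Infinite :=
    (infinite_coe_iff.mp hy).mono fun n (hn : (⟨S n, hSF n⟩ : F) = y) => congrArg Subtype.val hn
  obtain ⟨c₁, hc₁⟩ := hvisits.nonempty
  obtain ⟨c₂, hc₂, h₁₂⟩ := hvisits.exists_gt c₁
  obtain ⟨c₃, hc₃, h₂₃⟩ := hvisits.exists_gt c₂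
  obtain ⟨k, rfl⟩ := Nat.exists_eq_add_one_of_ne_zero (by omega : c₃ ≠ 0)
  have h₂k : c₂ < k := lt_of_le_of_ne (by omega) fun h => hw.succ_ne k (by
    rw [hc₃, ← h, hc₂])
  have := hw.one_le_marks_succ k
  rw [hc₃, hw.marks_eq_zero_of_visits h2 h₁₂ h₂k hc₁ hc₂] at this
  omega

end IsGreedyWalk_s15

/-- The initial marks of `ω⁺`: one mark at the origin, and the marks of `ω = X + Y`
on `(0, ∞)`. -/
def plusMarks (X Y : Set ℝ) (z : ℝ) : ℕ :=
  ({0} : Set ℝ).indicator 1 z + (Ioi 0).indicator (fun w => X.indicator 1 w + Y.indicator 1 w) z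

theorem plusMarks_le_two (X Y : Set ℝ) (z : ℝ) : plusMarks X Y z ≤ 2 := by
  simp only [plusMarks, indicator, Pi.one_apply, mem_singleton_iff, mem_Ioi]
  split_ifs <;> grind

theorem one_le_plusMarks {X Y : Set ℝ} {z : ℝ} (hz : z ∈ X) (hz0 : 0 ≤ z) :
    1 ≤ plusMarks X Y z := by
  simp only [plusMarks, indicator, Pi.one_apply, mem_singleton_iff, mem_Ioi]
  split_ifs <;> grind

theorem eq_zero_or_mem_of_one_le_plusMarks {X Y : Set ℝ} (hYX : Y ⊆ X) {z : ℝ}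
    (h : 1 ≤ plusMarks X Y z) : z = 0 ∨ 0 < z ∧ z ∈ X := by
  simp only [plusMarks, indicator, Pi.one_apply, mem_singleton_iff, mem_Ioi] at h
  split_ifs at h <;> grind

namespace IsGreedyWalk_s15

variable {S : ℕ → ℝ} {marks : ℕ → ℝ → ℕ} {X Y : Set ℝ}

theorem eq_zero_or_mem_of_one_le_marks (hw : IsGreedyWalk_s15 S marks) (hYX : Y ⊆ X)
    (hm0 : marks 0 = plusMarks X Y) {n : ℕ} {z : ℝ} (h : 1 ≤ marks n z) :
    z = 0 ∨ 0 < z ∧ z ∈ X :=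
  eq_zero_or_mem_of_one_le_plusMarks hYX (hm0 ▸ h.trans (hw.marks_antitone z n.zero_le))

theorem eq_zero_or_mem (hw : IsGreedyWalk_s15 S marks) (hYX : Y ⊆ X)
    (hm0 : marks 0 = plusMarks X Y) (hS0 : S 0 = 0) (n : ℕ) : S n = 0 ∨ 0 < S n ∧ S n ∈ X := by
  cases n with
  | zero => exact Or.inl hS0
  | succ k => exact hw.eq_zero_or_mem_of_one_le_marks hYX hm0 (hw.one_le_marks_succ k)

theorem exists_eq_of_mem (hw : IsGreedyWalk_s15 S marks) (hYX : Y ⊆ X)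
    (hm0 : marks 0 = plusMarks X Y) (hS0 : S 0 = 0) {r : ℝ} (hfin : (X ∩ Icc 0 r).Finite)
    (hr : r ∈ X) (hr0 : 0 < r) : ∃ n, S n = r := by
  by_contra! hne
  have hmr : ∀ n, 1 ≤ marks n r := fun n => by
    rw [hw.marks_eq_marks_zero fun j _ => hne j, hm0]
    exact one_le_plusMarks hr hr0.le
  refine hw.not_forall_mem_of_finite (fun z => hm0 ▸ plusMarks_le_two X Y z) (hfin.insert 0)
    fun n => ?_
  have hlt : S n < r := (hne n).lt_of_le <| not_lt.mp fun hgt => by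
    obtain ⟨c, -, -, hc⟩ :=
      hw.exists_eq_of_lt_of_lt n.zero_le (hmr n) (by rwa [hS0]) hgt
    exact hne c hc
  rcases hw.eq_zero_or_mem hYX hm0 hS0 n with h | ⟨hpos, hX⟩
  · exact Or.inl h
  · exact Or.inr ⟨hX, hpos.le, hlt.le⟩

theorem marks_eq_zero_of_mem_Ico (hw : IsGreedyWalk_s15 S marks) (hYX : Y ⊆ X)
    (hm0 : marks 0 = plusMarks X Y) (hS0 : S 0 = 0) {x r : ℝ} {T n₀ m : ℕ} (hx : x ∈ X)
    (hx0 : 0 ≤ x) (hT : marks (T + 1) x = 0) (hTmin : ∀ k < T, marks (k + 1) x ≠ 0)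
    (hn₀T : n₀ ≤ T) (hmax : ∀ n ≤ T, S n ≤ S n₀) (hr : IsLeast (X ∩ Ioi (S n₀)) r)
    (hm : S m = r) : ∀ z ∈ Ico x r, marks m z = 0 := by
  have hST : S T = x := by
    have hxT : 1 ≤ marks T x := by
      cases T with
      | zero => rw [hm0]; exact one_le_plusMarks hx hx0
      | succ k => exact Nat.one_le_iff_ne_zero.mpr (hTmin k k.lt_succ_self)
    by_contra hne
    rw [hw.marks_succ_of_ne hne] at hT
    omega
  have hTm : T < m := lt_of_not_ge fun hmT => hr.1.2.not_ge (hm ▸ hmax m hmT)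
  rintro z ⟨hxz, hzr⟩
  by_contra hmz
  replace hmz : 1 ≤ marks m z := Nat.one_le_iff_ne_zero.mpr hmz
  have hmarked : ∀ n ≤ m, 1 ≤ marks n z := fun n hn => hmz.trans (hw.marks_antitone z hn)
  rcases hxz.eq_or_lt with rfl | hxz
  · have : marks m x ≤ marks (T + 1) x := hw.marks_antitone x hTm
    omega
  have hzX : z ∈ X := ((hw.eq_zero_or_mem_of_one_le_marks hYX hm0 hmz).resolve_left
    (by linarith)).2
  have hzn₀ : z ≤ S n₀ := not_lt.mp fun h => hzr.not_ge (hr.2 ⟨hzX, h⟩)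
  obtain ⟨c₁, c₂, h₁₂, h₂m, h₁, h₂⟩ : ∃ c₁ c₂, c₁ < c₂ ∧ c₂ < m ∧ S c₁ = z ∧ S c₂ = z := by
    rcases hzn₀.lt_or_eq with hlt | heq
    · obtain ⟨c₁, -, hc₁, h₁⟩ := hw.exists_eq_of_lt_of_lt n₀.zero_le (hmarked n₀ (by omega))
        (by rw [hS0]; linarith) hlt
      obtain ⟨c₂, hc₂, hc₂T, h₂⟩ := hw.exists_eq_of_gt_of_gt hn₀T (hmarked T hTm.le) hlt
        (by rwa [hST])
      exact ⟨c₁, c₂, hc₁.trans hc₂, hc₂T.trans hTm, h₁, h₂⟩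
    · have hn₀T' : n₀ < T := hn₀T.lt_of_ne (by rintro rfl; linarith)
      obtain ⟨c, hTc, hcm, hc⟩ :=
        hw.exists_eq_of_lt_of_lt hTm.le hmz (by rwa [hST]) (by rwa [hm])
      exact ⟨n₀, c, hn₀T'.trans hTc, hcm, heq.symm, hc⟩
  have := hw.marks_eq_zero_of_visits (fun z => hm0 ▸ plusMarks_le_two X Y z) h₁₂ h₂m h₁ h₂
  omega

end IsGreedyWalk_s15

section Configurations

open MeasureTheory

theorem IsPoissonPP.measure_ptCount_Ioc_eq_zero {Ω : Type} [MeasurableSpace Ω]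
    {P : Measure Ω} {N : Ω → Set ℝ} {c : ℝ} (h : IsPoissonPP P N c) (a : ℝ) (n : ℕ) :
    P {ω | ptCount (N ω) (Ioc a (a + n)) = 0} = ENNReal.ofReal (Real.exp (-(c * n))) := by
  have hvol : volume (Ioc a (a + n)) = ENNReal.ofReal n := by simp
  rw [h.2.2.1 _ measurableSet_Ioc (by simp [hvol]) 0, hvol, ENNReal.toReal_ofReal n.cast_nonneg]
  simp

theorem IsPoissonPP.ae_nonempty_inter_Ioi {Ω : Type} [MeasurableSpace Ω]
    {P : Measure Ω} {N : Ω → Set ℝ} {c : ℝ} (h : IsPoissonPP P N c) (hc : 0 < c) :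
    ∀ᵐ ω ∂P, ∀ t : ℝ, (N ω ∩ Ioi t).Nonempty := by
  have hK : ∀ K : ℕ, ∀ᵐ ω ∂P, (N ω ∩ Ioi (K : ℝ)).Nonempty := fun K => by
    have hlim : Filter.Tendsto (fun n : ℕ => ENNReal.ofReal (Real.exp (-(c * n))))
        Filter.atTop (nhds 0) := by
      rw [← ENNReal.ofReal_zero]
      exact ENNReal.tendsto_ofReal (Real.tendsto_exp_neg_atTop_nhds_zero.comp
        (tendsto_natCast_atTop_atTop.const_mul_atTop hc))
    refine ae_iff.mpr (le_antisymm (ge_of_tendsto' hlim fun n => ?_) bot_le)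
    rw [← h.measure_ptCount_Ioc_eq_zero K n]
    refine measure_mono fun ω hω => ?_
    have hempty : N ω ∩ Ioc (K : ℝ) (K + n) = ∅ :=
      subset_empty_iff.mp fun y hy => hω ⟨y, hy.1, hy.2.1⟩
    simp [ptCount, hempty]
  filter_upwards [ae_all_iff.mpr hK] with ω hω t
  obtain ⟨K, htK⟩ := exists_nat_ge t
  exact (hω K).mono (inter_subset_inter_right _ (Ioi_subset_Ioi htK))

theorem exists_isLeast_inter_Ioi {X : Set ℝ} (hfin : ∀ t, (X ∩ Icc (-t) t).Finite) {a : ℝ}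
    (hne : (X ∩ Ioi a).Nonempty) : ∃ r, IsLeast (X ∩ Ioi a) r := by
  obtain ⟨b, hbX, hab⟩ := hne
  have hF : (X ∩ Ioc a b).Finite := (hfin (|a| + |b|)).subset fun y ⟨hyX, hay, hyb⟩ =>
    ⟨hyX, by linarith [neg_abs_le a, abs_nonneg b], by linarith [le_abs_self b, abs_nonneg a]⟩
  obtain ⟨r, ⟨hrX, har, -⟩, hmin⟩ := exists_min_image _ id hF ⟨b, hbX, hab, le_rfl⟩
  refine ⟨r, ⟨hrX, har⟩, fun y ⟨hyX, hay⟩ => ?_⟩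
  rcases le_or_gt y b with hyb | hby
  · exact hmin y ⟨hyX, hay, hyb⟩
  · exact (hmin b ⟨hbX, hab, le_rfl⟩).trans hby.le

theorem exists_sSup_eq_of_le (f : ℕ → ℝ) (T : ℕ) :
    ∃ n₀ ≤ T, sSup {d | ∃ n, n ≤ T ∧ d = f n} = f n₀ ∧ ∀ n ≤ T, f n ≤ f n₀ := by
  obtain ⟨n₀, hn₀, hmax⟩ := exists_max_image (Iic T) f (finite_Iic T) ⟨0, T.zero_le⟩
  refine ⟨n₀, hn₀, IsGreatest.csSup_eq ⟨⟨n₀, hn₀, rfl⟩, ?_⟩, hmax⟩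
  rintro d ⟨n, hn, rfl⟩
  exact hmax n hn

end Configurations

namespace GreedyModel

open MeasureTheory

variable (M : GreedyModel)

theorem marksp_zero (ωs : M.Ω) : M.marksp 0 ωs = plusMarks (M.X ωs) (M.Y ωs) :=
  funext (M.hmarksp0 ωs)

theorem ae_isGreedyWalk_s15 : ∀ᵐ ωs ∂M.P, IsGreedyWalk_s15 (M.Sp · ωs) (M.marksp · ωs) := by
  filter_upwards [M.hwalkp] with ωs h
  exact ⟨fun n z => M.hmarksprec n ωs z, fun n => (h n).1, fun n => (h n).2.1,
    fun n => (h n).2.2⟩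

theorem ae_finite_inter_Icc : ∀ᵐ ωs ∂M.P, ∀ t, (M.X ωs ∩ Icc (-t) t).Finite := by
  filter_upwards [M.hpoisson.2.1.1, M.hpoisson.2.2.1.1] with ωs hY hXY t
  refine (((hY t).union (hXY t)).insert 0).subset fun y ⟨hyX, hyt⟩ => ?_
  simp only [mem_insert_iff, mem_union, mem_inter_iff, mem_sdiff, mem_singleton_iff]
  tauto

theorem ae_nonempty_inter_Ioi : ∀ᵐ ωs ∂M.P, ∀ t, (M.X ωs ∩ Ioi t).Nonempty := by
  filter_upwards [M.hpoisson.2.2.1.ae_nonempty_inter_Ioi (by linarith [M.hp1])] with ωs h t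
  obtain ⟨y, ⟨⟨hyX, -⟩, -⟩, hyt⟩ := h t
  exact ⟨y, hyX, hyt⟩

variable {M}

theorem exists_TRtime_eq_natCast {ωs : M.Ω} {x : ℝ} (h : TRtime M ωs x < ⊤) :
    ∃ T : ℕ, TRtime M ωs x = T ∧ M.marksp (T + 1) ωs x = 0 ∧
      ∀ k < T, M.marksp (k + 1) ωs x ≠ 0 := by
  set s := {n | M.marksp (n + 1) ωs x = 0}
  have hs : s.Nonempty := by
    by_contra hs
    simp [TRtime, s, not_nonempty_iff_eq_empty.mp hs] at h
  refine ⟨sInf s, ?_, Nat.sInf_mem hs, fun k hk => Nat.notMem_of_lt_sInf (s := s) hk⟩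
  rw [TRtime, sInf_image, ENat.natCast_sInf hs]

end GreedyModel

/-- `ℙ¹`-almost surely, for every `x ∈ 𝒳 ∩ [0,∞)` with `𝒯ᴿ_x < ∞`, at the first time the
greedy walk on `ω⁺` hits the point `x + L(x)`, no marks remain in `[x, x + L(x))`. -/
theorem renewal_block_completely_cleared (M : GreedyModel) :
    ∀ᵐ ωs ∂M.P, ∀ x ∈ M.X ωs, 0 ≤ x → TRtime M ωs x < ⊤ →
      ∃ m : ℕ, M.Sp m ωs = x + (ellReal M ωs x + xiReal M ωs x) ∧
        (∀ n < m, M.Sp n ωs ≠ x + (ellReal M ωs x + xiReal M ωs x)) ∧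
        ∀ z ∈ Set.Ico x (x + (ellReal M ωs x + xiReal M ωs x)), M.marksp m ωs z = 0 := by
  classical
  filter_upwards [M.ae_isGreedyWalk_s15, M.ae_finite_inter_Icc, M.ae_nonempty_inter_Ioi]
    with ωs hw hfin hub
  intro x hx hx0 hTRlt
  obtain ⟨T, hTR, hT, hTmin⟩ := GreedyModel.exists_TRtime_eq_natCast hTRlt
  obtain ⟨n₀, hn₀T, hell, hmax⟩ := exists_sSup_eq_of_le (M.Sp · ωs - x) T
  have hxℓ : x + ellReal M ωs x = M.Sp n₀ ωs := by
    rw [ellReal, hTR, ENat.toNat_natCast, hell]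
    ring
  obtain ⟨r, hr⟩ := exists_isLeast_inter_Ioi hfin (hub (M.Sp n₀ ωs))
  have hL : x + (ellReal M ωs x + xiReal M ωs x) = r := by
    rw [xiReal, hxℓ, hr.csInf_eq]
    linarith
  have hr0 : 0 < r := by linarith [mem_Ioi.mp hr.1.2, hmax 0 T.zero_le, M.hSp0 ωs]
  have hhit : ∃ m, M.Sp m ωs = r :=
    hw.exists_eq_of_mem (M.hYX ωs) (M.marksp_zero ωs) (M.hSp0 ωs)
      ((hfin r).subset (inter_subset_inter_right _ (Icc_subset_Icc (by linarith) le_rfl)))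
      hr.1.1 hr0
  rw [hL]
  exact ⟨Nat.find hhit, Nat.find_spec hhit, fun n hn => Nat.find_min hhit hn,
    hw.marks_eq_zero_of_mem_Ico (M.hYX ωs) (M.marksp_zero ωs) (M.hSp0 ωs) hx hx0 hT hTmin
      hn₀T (fun n hn => by linarith [hmax n hn]) hr (Nat.find_spec hhit)⟩
end
end

section
/- Consider the greedy walk on a Poisson point process of intensity 1 on ℝ where every point carries exactly one mark (each point is removed upon its first visit). Then almost surely there exists N such that the walk is strictly monotone from time N on (it eventually moves monotonically either to +∞ or to −∞); in particular, infinitely many Poisson points are never visited. -/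
open scoped ENNReal

noncomputable section

/-- The greedy (tourist) walk on a Poisson point process of intensity `1` on `ℝ` where
every point carries exactly one mark: under the Palm measure (a point is added at the
origin), `S 0 = 0` and `S (n+1)` is the point of `𝒳` not yet visited that is nearest to
`S n` (each point is removed upon its first visit); the next point is a.s. unique. -/
structure SingleMarkModel where
  Ω : Type
  [mΩ : MeasurableSpace Ω]
  P : MeasureTheory.Measure Ω
  hprob : MeasureTheory.IsProbabilityMeasure P
  X : Ω → Set ℝ
  /-- Palm conditioning on `0 ∈ 𝒳`: there is a point at the origin. -/
  h0X : ∀ ωs, (0 : ℝ) ∈ X ωs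
  /-- Away from the origin, `𝒳` is a Poisson point process of intensity `1`. -/
  hpoisson : IsPoissonPP P (fun ωs => X ωs \ {0}) 1
  S : ℕ → Ω → ℝ
  hS0 : ∀ ωs, S 0 ωs = 0
  hmeasS : ∀ n, Measurable fun ωs => S n ωs
  /-- Almost surely the walk is well defined: `S (n+1)` is a non-visited point of `𝒳`
  strictly closer to `S n` than any other non-visited point. -/
  hwalk : ∀ᵐ ωs ∂P, ∀ n : ℕ,
      S (n + 1) ωs ∈ X ωs ∧ (∀ m ≤ n, S (n + 1) ωs ≠ S m ωs) ∧
      ∀ z ∈ X ωs, (∀ m ≤ n, z ≠ S m ωs) → z ≠ S (n + 1) ωs →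
        |S (n + 1) ωs - S n ωs| < |z - S n ωs|

attribute [instance] SingleMarkModel.mΩ

/-!
The points of `X` inside the range `[runMin S n, runMax S n]` of a greedy walk have all been
visited, so every step leaves the range at one of its ends. When the walk crosses, i.e. jumps
from one end to beyond the other, that step is shorter than the distance to any point on the
near side; hence `X` has a gap as long as the new range, right next to it and so within twice
that length of the origin. By local finiteness the range grows without bound, whereas for a
Poisson process Borel–Cantelli over the dyadic scales `2 ^ j` (all 16 tiles of length `2 ^ j`
in `[-8 * 2 ^ j, 8 * 2 ^ j)` are occupied for large `j`) rules out such gaps at large scales.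
So the walk crosses only finitely often, then runs off in one direction for ever, never
visiting the infinitely many points on the other side.
-/

open Set Filter MeasureTheory

theorem Icc_min_max_subset_union_uIcc {α : Type*} [LinearOrder α] {a b c s : α}
    (hc : c ∈ Icc a b) : Icc (min a s) (max b s) ⊆ Icc a b ∪ uIcc c s := by
  intro x hx
  simp only [mem_Icc, min_le_iff, le_max_iff, mem_union, mem_uIcc] at *
  grind

section RunningExtrema

def runMin (S : ℕ → ℝ) : ℕ → ℝ
  | 0 => S 0
  | n + 1 => min (runMin S n) (S (n + 1))

def runMax (S : ℕ → ℝ) : ℕ → ℝ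
  | 0 => S 0
  | n + 1 => max (runMax S n) (S (n + 1))

def runWidth (S : ℕ → ℝ) (n : ℕ) : ℝ := runMax S n - runMin S n

variable (S : ℕ → ℝ) {i n N : ℕ}

theorem runMin_le (h : i ≤ n) : runMin S n ≤ S i := by
  induction n with
  | zero => rw [Nat.le_zero.1 h]; rfl
  | succ n ih =>
    rcases Nat.le_succ_iff.1 h with h | rfl
    · exact (min_le_left _ _).trans (ih h)
    · exact min_le_right _ _

theorem le_runMax (h : i ≤ n) : S i ≤ runMax S n := by
  induction n with
  | zero => rw [Nat.le_zero.1 h]; rfl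
  | succ n ih =>
    rcases Nat.le_succ_iff.1 h with h | rfl
    · exact (ih h).trans (le_max_left _ _)
    · exact le_max_right _ _

theorem runWidth_monotone : Monotone (runWidth S) :=
  monotone_nat_of_le_succ fun _ => sub_le_sub (le_max_left _ _) (min_le_left _ _)

theorem runMin_nonpos (h0 : S 0 = 0) (n : ℕ) : runMin S n ≤ 0 :=
  h0 ▸ runMin_le S n.zero_le

theorem runMax_nonneg (h0 : S 0 = 0) (n : ℕ) : 0 ≤ runMax S n :=
  h0 ▸ le_runMax S n.zero_le

theorem abs_le_runWidth (h0 : S 0 = 0) (n : ℕ) : |S n| ≤ runWidth S n := by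
  have := runMin_le S (le_refl n)
  have := le_runMax S (le_refl n)
  have := runMin_nonpos S h0 n
  have := runMax_nonneg S h0 n
  exact abs_le.2 ⟨by unfold runWidth; linarith, by unfold runWidth; linarith⟩

theorem runMin_le_of_monotone_add (h : Monotone fun k => S (N + k)) (i : ℕ) :
    runMin S N ≤ S i := by
  rcases le_or_gt i N with hi | hi
  · exact runMin_le S hi
  · obtain ⟨k, rfl⟩ := Nat.exists_eq_add_of_le hi.le
    exact (runMin_le S le_rfl).trans (h k.zero_le)

theorem le_runMax_of_antitone_add (h : Antitone fun k => S (N + k)) (i : ℕ) :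
    S i ≤ runMax S N := by
  rcases le_or_gt i N with hi | hi
  · exact le_runMax S hi
  · obtain ⟨k, rfl⟩ := Nat.exists_eq_add_of_le hi.le
    exact (h k.zero_le).trans (le_runMax S le_rfl)

end RunningExtrema

def IsGreedyWalk_s18 (X : Set ℝ) (S : ℕ → ℝ) : Prop :=
  ∀ n : ℕ, S (n + 1) ∈ X ∧ (∀ m ≤ n, S (n + 1) ≠ S m) ∧
    ∀ z ∈ X, (∀ m ≤ n, z ≠ S m) → z ≠ S (n + 1) → |S (n + 1) - S n| < |z - S n|

def IsCrossing (S : ℕ → ℝ) (n : ℕ) : Prop :=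
  (S n = runMax S n ∧ S (n + 1) < runMin S n) ∨ (S n = runMin S n ∧ runMax S n < S (n + 1))

/-- The windows are where a crossing of a range of width `W` around the origin leaves its gap. -/
def HasSublinearGaps (X : Set ℝ) : Prop :=
  ∃ R, ∀ W ≥ R, ∀ a ∈ Icc (-2 * W) W, (X ∩ Ioo a (a + W)).Nonempty

namespace HasSublinearGaps

variable {X Y : Set ℝ}

theorem mono (hX : HasSublinearGaps X) (hXY : X ⊆ Y) : HasSublinearGaps Y := by
  obtain ⟨R, hR⟩ := hX
  exact ⟨R, fun W hW a ha => (hR W hW a ha).mono (inter_subset_inter_left _ hXY)⟩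

theorem infinite_inter_Iio (hX : HasSublinearGaps X) (b : ℝ) : (X ∩ Iio b).Infinite := by
  obtain ⟨R, hR⟩ := hX
  refine infinite_of_not_bddBelow (not_bddBelow_iff.2 fun r => ?_)
  set W := max R (max |r| |b|)
  have hr : |r| ≤ W := (le_max_left _ _).trans (le_max_right _ _)
  have hb : |b| ≤ W := (le_max_right _ _).trans (le_max_right _ _)
  obtain ⟨x, hxX, hx⟩ := hR W (le_max_left _ _) (-2 * W)
    ⟨le_rfl, by linarith [abs_nonneg r]⟩
  have := neg_abs_le r
  have := neg_abs_le b
  exact ⟨x, ⟨hxX, by simp only [mem_Iio]; linarith [hx.2]⟩, by linarith [hx.2]⟩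

theorem infinite_inter_Ioi (hX : HasSublinearGaps X) (b : ℝ) : (X ∩ Ioi b).Infinite := by
  obtain ⟨R, hR⟩ := hX
  refine infinite_of_not_bddAbove (not_bddAbove_iff.2 fun r => ?_)
  set W := max R (max |r| |b|)
  have hr : |r| ≤ W := (le_max_left _ _).trans (le_max_right _ _)
  have hb : |b| ≤ W := (le_max_right _ _).trans (le_max_right _ _)
  obtain ⟨x, hxX, hx⟩ := hR W (le_max_left _ _) W ⟨by linarith [abs_nonneg r], le_rfl⟩
  have := le_abs_self r
  have := le_abs_self b
  exact ⟨x, ⟨hxX, by simp only [mem_Ioi]; linarith [hx.1]⟩, by linarith [hx.1]⟩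

end HasSublinearGaps

namespace IsGreedyWalk_s18

variable {X : Set ℝ} {S : ℕ → ℝ}

theorem injective (hS : IsGreedyWalk_s18 X S) : Function.Injective S :=
  Function.Injective.of_lt_imp_ne fun i j hij => by
    obtain ⟨k, rfl⟩ := Nat.exists_eq_add_of_lt hij
    exact ((hS (i + k)).2.1 i (Nat.le_add_right i k)).symm

theorem exists_eq_of_abs_sub_le (hS : IsGreedyWalk_s18 X S) {n : ℕ} {z : ℝ} (hz : z ∈ X)
    (h : |z - S n| ≤ |S (n + 1) - S n|) : ∃ m ≤ n + 1, S m = z := by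
  by_contra! hne
  exact ((hS n).2.2 z hz (fun m hm => (hne m (by omega)).symm) (hne (n + 1) le_rfl).symm).not_ge h

theorem mem_Icc_of_abs_sub_le (hS : IsGreedyWalk_s18 X S) {n : ℕ} {z : ℝ} (hz : z ∈ X)
    (h : |z - S n| ≤ |S (n + 1) - S n|) : z ∈ Icc (runMin S (n + 1)) (runMax S (n + 1)) := by
  obtain ⟨m, hm, rfl⟩ := hS.exists_eq_of_abs_sub_le hz h
  exact ⟨runMin_le S hm, le_runMax S hm⟩

theorem exists_eq_of_mem_Icc (hS : IsGreedyWalk_s18 X S) {n : ℕ} {x : ℝ} (hx : x ∈ X)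
    (hxI : x ∈ Icc (runMin S n) (runMax S n)) : ∃ m ≤ n, S m = x := by
  induction n with
  | zero => exact ⟨0, le_rfl, le_antisymm hxI.1 hxI.2⟩
  | succ n ih =>
    have hSn : S n ∈ Icc (runMin S n) (runMax S n) := ⟨runMin_le S le_rfl, le_runMax S le_rfl⟩
    rcases Icc_min_max_subset_union_uIcc hSn hxI with hxI | hxI
    · obtain ⟨m, hm, rfl⟩ := ih hxI
      exact ⟨m, hm.trans n.le_succ, rfl⟩
    · exact hS.exists_eq_of_abs_sub_le hx (abs_sub_left_of_mem_uIcc hxI)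

theorem succ_notMem_Icc (hS : IsGreedyWalk_s18 X S) (n : ℕ) :
    S (n + 1) ∉ Icc (runMin S n) (runMax S n) := fun h => by
  obtain ⟨m, hm, he⟩ := hS.exists_eq_of_mem_Icc (hS n).1 h
  exact (hS n).2.1 m hm he.symm

theorem eq_runMin_or_eq_runMax (hS : IsGreedyWalk_s18 X S) :
    ∀ n, S n = runMin S n ∨ S n = runMax S n
  | 0 => Or.inl rfl
  | n + 1 => by
    rcases not_and_or.1 (hS.succ_notMem_Icc n) with h | h
    · exact Or.inl (min_eq_right (not_le.1 h).le).symm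
    · exact Or.inr (max_eq_right (not_le.1 h).le).symm

theorem exists_gap_of_isCrossing (hS : IsGreedyWalk_s18 X S) (h0 : S 0 = 0) {n : ℕ}
    (hc : IsCrossing S n) :
    ∃ a ∈ Icc (-2 * runWidth S (n + 1)) (runWidth S (n + 1)),
      ∀ x ∈ X, x ∉ Ioo a (a + runWidth S (n + 1)) := by
  have hmin := runMin_nonpos S h0 n
  have hmax := runMax_nonneg S h0 n
  have hle : runMin S n ≤ runMax S n := (runMin_le S n.zero_le).trans (le_runMax S n.zero_le)
  rcases hc with ⟨hn, hlt⟩ | ⟨hn, hlt⟩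
  · have hW : runWidth S (n + 1) = runMax S n - S (n + 1) := by
      simp only [runWidth, runMax, runMin, min_eq_right hlt.le, max_eq_left (hlt.le.trans hle)]
    refine ⟨runMax S n, ⟨by linarith, by linarith⟩, fun x hx hxI => ?_⟩
    rw [hW] at hxI
    have hvis := (hS.mem_Icc_of_abs_sub_le hx (by
      rw [hn, abs_of_pos (by linarith [hxI.1]), abs_of_neg (by linarith)]; linarith [hxI.2])).2
    rw [runMax, max_eq_left (hlt.le.trans hle)] at hvis
    linarith [hxI.1]
  · have hW : runWidth S (n + 1) = S (n + 1) - runMin S n := by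
      simp only [runWidth, runMax, runMin, max_eq_right hlt.le, min_eq_left (hle.trans hlt.le)]
    refine ⟨runMin S n - runWidth S (n + 1), ⟨by linarith, by linarith⟩, fun x hx hxI => ?_⟩
    rw [hW] at hxI
    have hvis := (hS.mem_Icc_of_abs_sub_le hx (by
      rw [hn, abs_of_neg (by linarith [hxI.2]), abs_of_pos (by linarith)]; linarith [hxI.1])).1
    rw [runMin, min_eq_left (hle.trans hlt.le)] at hvis
    linarith [hxI.2]

theorem tendsto_runWidth (hS : IsGreedyWalk_s18 X S) (h0 : S 0 = 0)
    (hfin : ∀ r : ℝ, (X ∩ Icc (-r) r).Finite) : Tendsto (runWidth S) atTop atTop := by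
  refine (runWidth_monotone S).tendsto_atTop_atTop_iff.2 fun r => ?_
  by_contra! h
  refine (infinite_range_of_injective (hS.injective.comp Nat.succ_injective)) ((hfin r).subset ?_)
  rintro _ ⟨n, rfl⟩
  exact ⟨(hS n).1, abs_le.1 ((abs_le_runWidth S h0 (n + 1)).trans (h _).le)⟩

theorem eventually_not_isCrossing (hS : IsGreedyWalk_s18 X S) (h0 : S 0 = 0)
    (hfin : ∀ r : ℝ, (X ∩ Icc (-r) r).Finite) (hgaps : HasSublinearGaps X) :
    ∀ᶠ n in atTop, ¬IsCrossing S n := by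
  obtain ⟨R, hR⟩ := hgaps
  filter_upwards [(hS.tendsto_runWidth h0 hfin).eventually_ge_atTop R] with n hn hc
  obtain ⟨a, ha, hgap⟩ := hS.exists_gap_of_isCrossing h0 hc
  obtain ⟨x, hxX, hx⟩ := hR _ (hn.trans (runWidth_monotone S n.le_succ)) a ha
  exact hgap x hxX hx

theorem strictMono_of_eq_runMax (hS : IsGreedyWalk_s18 X S) {N : ℕ} (hN : S N = runMax S N)
    (hnc : ∀ n ≥ N, ¬IsCrossing S n) : StrictMono fun k => S (N + k) := by
  have step : ∀ n ≥ N, S n = runMax S n → runMax S n < S (n + 1) := fun n hn h =>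
    not_le.1 <| (not_and_or.1 (hS.succ_notMem_Icc n)).resolve_left
      fun hlt => hnc n hn (Or.inl ⟨h, not_le.1 hlt⟩)
  have hmax : ∀ k, S (N + k) = runMax S (N + k) := by
    intro k
    induction k with
    | zero => exact hN
    | succ k ih => exact (max_eq_right (step _ (Nat.le_add_right N k) ih).le).symm
  exact strictMono_nat_of_lt_succ fun k =>
    (hmax k).trans_lt (step _ (Nat.le_add_right N k) (hmax k))

theorem strictAnti_of_eq_runMin (hS : IsGreedyWalk_s18 X S) {N : ℕ} (hN : S N = runMin S N)
    (hnc : ∀ n ≥ N, ¬IsCrossing S n) : StrictAnti fun k => S (N + k) := by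
  have step : ∀ n ≥ N, S n = runMin S n → S (n + 1) < runMin S n := fun n hn h =>
    not_le.1 <| (not_and_or.1 (hS.succ_notMem_Icc n)).resolve_right
      fun hlt => hnc n hn (Or.inr ⟨h, not_le.1 hlt⟩)
  have hmin : ∀ k, S (N + k) = runMin S (N + k) := by
    intro k
    induction k with
    | zero => exact hN
    | succ k ih => exact (min_eq_right (step _ (Nat.le_add_right N k) ih).le).symm
  exact strictAnti_nat_of_succ_lt fun k =>
    (step _ (Nat.le_add_right N k) (hmin k)).trans_eq (hmin k).symm

theorem eventually_strictMono_and_infinite_unvisited (hS : IsGreedyWalk_s18 X S) (h0 : S 0 = 0)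
    (hfin : ∀ r : ℝ, (X ∩ Icc (-r) r).Finite) (hgaps : HasSublinearGaps X) :
    (∃ N : ℕ, StrictMono (fun n => S (N + n)) ∨ StrictAnti (fun n => S (N + n))) ∧
      {x : ℝ | x ∈ X ∧ ∀ n : ℕ, S n ≠ x}.Infinite := by
  obtain ⟨N, hN⟩ := eventually_atTop.1 (hS.eventually_not_isCrossing h0 hfin hgaps)
  rcases hS.eq_runMin_or_eq_runMax N with hmin | hmax
  · have hanti := hS.strictAnti_of_eq_runMin hmin hN
    refine ⟨⟨N, Or.inr hanti⟩, (hgaps.infinite_inter_Ioi (runMax S N)).mono ?_⟩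
    rintro x ⟨hx, hxb⟩
    exact ⟨hx, fun n h => (le_runMax_of_antitone_add S hanti.antitone n).not_gt (h ▸ hxb)⟩
  · have hmono := hS.strictMono_of_eq_runMax hmax hN
    refine ⟨⟨N, Or.inl hmono⟩, (hgaps.infinite_inter_Iio (runMin S N)).mono ?_⟩
    rintro x ⟨hx, hxb⟩
    exact ⟨hx, fun n h => (runMin_le_of_monotone_add S hmono.monotone n).not_gt (h ▸ hxb)⟩

end IsGreedyWalk_s18

theorem exists_tile_subset_Ioo {s W a : ℝ} (hs : 0 < s) (hsW : 2 * s ≤ W) (hWs : W < 4 * s)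
    (ha : a ∈ Icc (-2 * W) W) :
    ∃ k ∈ Finset.Ico (-8 : ℤ) 8, Ico (k * s) ((k + 1) * s) ⊆ Ioo a (a + W) := by
  have hfl : (⌊a / s⌋ : ℝ) * s ≤ a := (le_div_iff₀ hs).1 (Int.floor_le _)
  have hlt : a < ((⌊a / s⌋ : ℝ) + 1) * s := (div_lt_iff₀ hs).1 (Int.lt_floor_add_one _)
  refine ⟨⌊a / s⌋ + 1, Finset.mem_Ico.2 ⟨?_, ?_⟩, fun x hx => ?_⟩
  · have : (-9 : ℝ) < ⌊a / s⌋ := by nlinarith [ha.1]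
    exact_mod_cast (by linarith : (-8 : ℝ) ≤ ⌊a / s⌋ + 1)
  · have : (⌊a / s⌋ : ℝ) < 4 := by nlinarith [ha.2]
    exact_mod_cast (by linarith : (⌊a / s⌋ : ℝ) + 1 < 8)
  · push_cast at hx
    exact ⟨hlt.trans_le hx.1, by nlinarith [hx.2]⟩

theorem hasSublinearGaps_of_eventually_tiles_nonempty {X : Set ℝ}
    (h : ∀ᶠ j in atTop, ∀ k ∈ Finset.Ico (-8 : ℤ) 8,
      (X ∩ Ico (k * 2 ^ j) ((k + 1) * 2 ^ j)).Nonempty) : HasSublinearGaps X := by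
  obtain ⟨J, hJ⟩ := eventually_atTop.1 h
  have hJpos : (0 : ℝ) < 2 * 2 ^ J := by positivity
  refine ⟨2 * 2 ^ J, fun W hW a ha => ?_⟩
  obtain ⟨n, hn, hn'⟩ := exists_nat_pow_near (x := W / (2 * 2 ^ J)) (y := (2 : ℝ))
    ((one_le_div hJpos).2 hW) one_lt_two
  rw [le_div_iff₀ hJpos] at hn
  rw [div_lt_iff₀ hJpos] at hn'
  obtain ⟨k, hk, hsub⟩ := exists_tile_subset_Ioo (s := 2 ^ (J + n)) (by positivity)
    (by rw [pow_add]; linarith) (by rw [pow_add]; rw [pow_succ] at hn'; linarith) ha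
  obtain ⟨x, hxX, hx⟩ := hJ (J + n) (Nat.le_add_right J n) k hk
  exact ⟨x, hxX, hsub hx⟩

namespace IsPoissonPP

variable {Ω : Type} [MeasurableSpace Ω] {P : Measure Ω} {N : Ω → Set ℝ} {c : ℝ}

theorem measure_ptCount_Ico_eq_zero (hN : IsPoissonPP P N c) {a b : ℝ} (hab : a ≤ b) :
    P {ω | ptCount (N ω) (Ico a b) = 0} = ENNReal.ofReal (Real.exp (-(c * (b - a)))) := by
  have h := hN.2.2.1 (Ico a b) measurableSet_Ico (by simp [Real.volume_Ico]) 0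
  simpa [Real.volume_Ico, ENNReal.toReal_ofReal (sub_nonneg.2 hab)] using h

theorem ae_eventually_tiles_nonempty (hN : IsPoissonPP P N c) (hc : 0 < c) :
    ∀ᵐ ω ∂P, ∀ᶠ j in atTop, ∀ k ∈ Finset.Ico (-8 : ℤ) 8,
      (N ω ∩ Ico (k * 2 ^ j) ((k + 1) * 2 ^ j)).Nonempty := by
  set r := ENNReal.ofReal (Real.exp (-c))
  have hr : r < 1 := ENNReal.ofReal_lt_one.2 (Real.exp_lt_one_iff.2 (neg_lt_zero.2 hc))
  have hE : ∀ j : ℕ, P (⋃ k ∈ Finset.Ico (-8 : ℤ) 8,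
      {ω | ptCount (N ω) (Ico (k * 2 ^ j) ((k + 1) * 2 ^ j)) = 0}) ≤ 16 * r ^ j := fun j =>
    calc _ ≤ ∑ k ∈ Finset.Ico (-8 : ℤ) 8,
          P {ω | ptCount (N ω) (Ico (k * 2 ^ j) ((k + 1) * 2 ^ j)) = 0} :=
          measure_biUnion_finset_le _ _
      _ = ∑ _k ∈ Finset.Ico (-8 : ℤ) 8, ENNReal.ofReal (Real.exp (-(c * 2 ^ j))) :=
          Finset.sum_congr rfl fun k _ => by
            rw [hN.measure_ptCount_Ico_eq_zero
              (by rw [add_one_mul]; exact le_add_of_nonneg_right (by positivity))]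
            ring_nf
      _ ≤ 16 * r ^ j := by
          rw [Finset.sum_const, show (Finset.Ico (-8 : ℤ) 8).card = 16 from rfl, nsmul_eq_mul,
            Nat.cast_ofNat]
          gcongr
          rw [← ENNReal.ofReal_pow (Real.exp_nonneg _), ← Real.exp_nat_mul]
          gcongr
          have : (j : ℝ) ≤ 2 ^ j := by exact_mod_cast Nat.lt_two_pow_self.le
          nlinarith
  have hsum : ∑' j, P (⋃ k ∈ Finset.Ico (-8 : ℤ) 8,
      {ω | ptCount (N ω) (Ico (k * 2 ^ j) ((k + 1) * 2 ^ j)) = 0}) ≠ ⊤ := by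
    refine ne_top_of_le_ne_top ?_ (ENNReal.tsum_le_tsum hE)
    rw [ENNReal.tsum_mul_left, ENNReal.tsum_geometric]
    exact ENNReal.mul_ne_top (by norm_num) (ENNReal.inv_ne_top.2 (tsub_pos_of_lt hr).ne')
  filter_upwards [ae_eventually_notMem hsum] with ω hω
  filter_upwards [hω] with j hj k hk
  exact nonempty_of_ncard_ne_zero fun h => hj (mem_iUnion₂.2 ⟨k, hk, h⟩)

theorem ae_hasSublinearGaps (hN : IsPoissonPP P N c) (hc : 0 < c) :
    ∀ᵐ ω ∂P, HasSublinearGaps (N ω) :=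
  (hN.ae_eventually_tiles_nonempty hc).mono fun _ => hasSublinearGaps_of_eventually_tiles_nonempty

end IsPoissonPP

/-- With one mark per point, the greedy walk is almost surely eventually strictly
monotone (it drifts to `+∞` or to `-∞`); in particular infinitely many Poisson points
are never visited. -/
theorem single_mark_walk_eventually_monotone (M : SingleMarkModel) :
    ∀ᵐ ωs ∂M.P,
      (∃ N : ℕ, StrictMono (fun n => M.S (N + n) ωs) ∨
        StrictAnti (fun n => M.S (N + n) ωs)) ∧
      {x : ℝ | x ∈ M.X ωs ∧ ∀ n : ℕ, M.S n ωs ≠ x}.Infinite := by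
  filter_upwards [M.hpoisson.1, M.hpoisson.ae_hasSublinearGaps one_pos, M.hwalk]
    with ω hfin hgaps hwalk
  have hfin' : ∀ r : ℝ, (M.X ω ∩ Icc (-r) r).Finite := fun r =>
    ((hfin r).insert 0).subset fun x hx => or_iff_not_imp_left.2 fun h => ⟨⟨hx.1, h⟩, hx.2⟩
  exact IsGreedyWalk_s18.eventually_strictMono_and_infinite_unvisited (S := fun n => M.S n ω) hwalk
    (M.hS0 ω) hfin' (hgaps.mono sdiff_subset)

end
end
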